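/- Let F = {house, K_{2,3}} and let G be a graph containing a 4-cycle v1v2v3v4 with deg_G(v1) = deg_G(v3) = 4 and deg_G(v2) = 5 (v4 of arbitrary degree). Then the subgraph induced by {v1,v2,v3,v4} is (F,5)-boundary-reducible with boundary {v4}. -/

import Mathlib

/-!
Deleting the boundary `v4` leaves the path `v1 v2 v3` (a triangle if `v1 ~ v3`). As
`deg v1 = deg v3 = 4` and `deg v2 = 5`, the lists have one more color than the degree inside
the path at `v1`, `v3`, and as many at `v2`. Hence coloring greedily, starting from the vertex
whose list is cut down to one color, always succeeds: started at an end, the middle vertex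
still has its other neighbour uncolored. For (FORB), an apex seeing two vertices of the
`4`-cycle closes a house if they are consecutive and a `K_{2,3}` if they are opposite, so a
forbidding set meets the path in at most one vertex and (FORB) follows from (FIX).
-/

open Finset

/-- A proper coloring of `G` from the lists `L`. -/
def IsProperListColoring {V : Type} (G : SimpleGraph V) (L : V → Finset ℕ) (φ : V → ℕ) : Prop :=
  (∀ v, φ v ∈ L v) ∧ ∀ ⦃u v : V⦄, G.Adj u v → φ u ≠ φ v

/-- `G` is weighted `ε`-flexible for lists of size `k`. -/
def WeightedFlexible {V : Type} [Fintype V] (G : SimpleGraph V) (k : ℕ) (ε : ℝ) : Prop :=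
  ∀ L : V → Finset ℕ, (∀ v, k ≤ (L v).card) →
    ∀ w : V → ℕ → ℝ, (∀ v c, 0 ≤ w v c) → (∀ v c, c ∉ L v → w v c = 0) →
      ∃ φ : V → ℕ, IsProperListColoring G L φ ∧
        ε * (∑ v, ∑ c ∈ L v, w v c) ≤ ∑ v, w v (φ v)

/-- `G` is weakly `ε`-flexible for lists of size `k`. -/
def WeaklyFlexible {V : Type} [Fintype V] (G : SimpleGraph V) (k : ℕ) (ε : ℝ) : Prop :=
  ∀ L : V → Finset ℕ, (∀ v, k ≤ (L v).card) →
    ∀ r : V → ℕ, (∀ v, r v ∈ L v) →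
      ∃ φ : V → ℕ, IsProperListColoring G L φ ∧
        ε * (Fintype.card V : ℝ) ≤ ((Finset.univ.filter fun v => φ v = r v).card : ℝ)

/-- `G` has a drawing in the plane: vertices go to distinct points, edges to simple
continuous arcs joining their endpoints, arcs internally avoid vertices and each other. -/
def HasPlanarEmbedding {V : Type} (G : SimpleGraph V) : Prop :=
  ∃ (pos : V → ℝ × ℝ) (γ : Sym2 V → ℝ → ℝ × ℝ),
    Function.Injective pos ∧
    (∀ e ∈ G.edgeSet, ContinuousOn (γ e) (Set.Icc 0 1)) ∧
    (∀ e ∈ G.edgeSet, Set.InjOn (γ e) (Set.Icc 0 1)) ∧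
    (∀ u v : V, G.Adj u v → ({γ s(u, v) 0, γ s(u, v) 1} : Set (ℝ × ℝ)) = {pos u, pos v}) ∧
    (∀ e ∈ G.edgeSet, ∀ t ∈ Set.Ioo (0 : ℝ) 1, γ e t ∉ Set.range pos) ∧
    (∀ e ∈ G.edgeSet, ∀ f ∈ G.edgeSet, e ≠ f →
      ∀ s ∈ Set.Ioo (0 : ℝ) 1, ∀ t ∈ Set.Ioo (0 : ℝ) 1, γ e s ≠ γ f t)

/-- `G` contains a copy of the graph `p.2` as a (not necessarily induced) subgraph. -/
def ContainsCopy {V : Type} (G : SimpleGraph V) (p : (W : Type) × SimpleGraph W) : Prop :=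
  ∃ f : p.2 →g G, Function.Injective f

/-- `K₄` minus an edge (the diamond). -/
def diamondGraph : SimpleGraph (Fin 4) :=
  SimpleGraph.fromEdgeSet {s(0, 1), s(0, 2), s(0, 3), s(1, 2), s(1, 3)}

/-- The house: a `3`-cycle `0 1 4` and a `4`-cycle `0 1 2 3` sharing the edge `01`. -/
def houseGraph : SimpleGraph (Fin 5) :=
  SimpleGraph.fromEdgeSet {s(0, 1), s(1, 2), s(2, 3), s(3, 0), s(0, 4), s(1, 4)}

/-- Two triangles sharing exactly one vertex. -/
def bowtieGraph : SimpleGraph (Fin 5) :=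
  SimpleGraph.fromEdgeSet {s(0, 1), s(1, 2), s(0, 2), s(0, 3), s(3, 4), s(0, 4)}

/-- Two disjoint triangles joined by an edge. -/
def twoTrianglesEdgeGraph : SimpleGraph (Fin 6) :=
  SimpleGraph.fromEdgeSet {s(0, 1), s(1, 2), s(0, 2), s(3, 4), s(4, 5), s(3, 5), s(0, 3)}

def IsTriangle {V : Type} (G : SimpleGraph V) (a b c : V) : Prop :=
  G.Adj a b ∧ G.Adj b c ∧ G.Adj a c

/-- Any two distinct `3`-cycles of `G` are at distance at least `2`. -/
def TrianglesFarApart {V : Type} (G : SimpleGraph V) : Prop :=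
  ∀ a b c a' b' c' : V, IsTriangle G a b c → IsTriangle G a' b' c' →
    ({a, b, c} : Set V) ≠ ({a', b', c'} : Set V) →
    ∀ x ∈ ({a, b, c} : Set V), ∀ y ∈ ({a', b', c'} : Set V), x ≠ y ∧ ¬ G.Adj x y

/-- Every nonempty (induced) subgraph of `G` has a vertex of degree at most `d`. -/
def Degenerate {V : Type} (G : SimpleGraph V) [DecidableRel G.Adj] (d : ℕ) : Prop :=
  ∀ S : Finset V, S.Nonempty → ∃ v ∈ S, (S.filter fun w => G.Adj v w).card ≤ d

/-- The degree of `v` into the set `A`. -/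
def degIn {V : Type} (G : SimpleGraph V) [DecidableRel G.Adj] (A : Finset V) (v : V) : ℕ :=
  (A.filter fun w => G.Adj v w).card

/-- The graph induced by `G` on `T` is colorable from every list assignment
with list sizes at least `f`. -/
def ColorableOn {V : Type} (G : SimpleGraph V) (T : Finset V) (f : V → ℤ) : Prop :=
  ∀ L : V → Finset ℕ, (∀ v ∈ T, f v ≤ ((L v).card : ℤ)) →
    ∃ φ : V → ℕ, (∀ v ∈ T, φ v ∈ L v) ∧ ∀ u ∈ T, ∀ v ∈ T, G.Adj u v → φ u ≠ φ v

/-- The subgraph of `G` induced on `S`, together with one additional vertex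
adjacent exactly to the vertices of `I`. -/
def apexGraph {V : Type} (G : SimpleGraph V) (S I : Finset V) :
    SimpleGraph ({x // x ∈ S} ⊕ Unit) where
  Adj x y :=
    match x, y with
    | Sum.inl a, Sum.inl b => G.Adj a.1 b.1
    | Sum.inl a, Sum.inr _ => a.1 ∈ I
    | Sum.inr _, Sum.inl b => b.1 ∈ I
    | Sum.inr _, Sum.inr _ => False
  symm := by
    constructor
    rintro (a | a) (b | b) h
    · exact G.adj_symm h
    · exact h
    · exact h
    · exact h
  loopless := by
    constructor
    rintro (a | a) h
    · exact G.irrefl h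
    · exact h

/-- `I ⊆ S` is `F`-forbidding (for the subgraph of `G` induced on `S`):
the induced subgraph plus an apex over `I` contains no member of `F` as a subgraph. -/
def Forbidding {V : Type} (F : Set ((W : Type) × SimpleGraph W)) (G : SimpleGraph V)
    (S I : Finset V) : Prop :=
  ∀ p ∈ F, ¬ ContainsCopy (apexGraph G S I) p

/-- The subgraph of `G` induced on `S` is `(F,k)`-boundary-reducible with boundary `B`,
inside the ambient induced subgraph of `G` on `A` (degrees `deg_G` are measured in `A`). -/
def BoundaryReducibleIn {V : Type} [DecidableEq V] (F : Set ((W : Type) × SimpleGraph W))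
    (k : ℕ) (G : SimpleGraph V) [DecidableRel G.Adj] (A S B : Finset V) : Prop :=
  S ⊆ A ∧ B ⊂ S ∧
  (∀ v ∈ S \ B, ColorableOn G (S \ B)
      (Function.update (fun w => (k : ℤ) - degIn G A w + degIn G (S \ B) w) v 1)) ∧
  (∀ I : Finset V, I ⊆ S \ B → (I.card : ℤ) ≤ (k : ℤ) - 2 → Forbidding F G S I →
    ColorableOn G (S \ B)
      (fun w => (k : ℤ) - degIn G A w + degIn G (S \ B) w - if w ∈ I then 1 else 0))

/-- Weak `(F,k)`-boundary-reducibility, witnessed by the set `Fx = Fix(H)`. -/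
def WeakBoundaryReducibleInWith {V : Type} [DecidableEq V]
    (F : Set ((W : Type) × SimpleGraph W)) (k : ℕ) (G : SimpleGraph V) [DecidableRel G.Adj]
    (A S B Fx : Finset V) : Prop :=
  S ⊆ A ∧ B ⊂ S ∧ Fx.Nonempty ∧ Fx ⊆ S \ B ∧
  (∀ v ∈ Fx, ColorableOn G (S \ B)
      (Function.update (fun w => (k : ℤ) - degIn G A w + degIn G (S \ B) w) v 1)) ∧
  (∀ I : Finset V, I ⊆ S \ B → (I.card : ℤ) ≤ (k : ℤ) - 2 → Forbidding F G S I →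
    ColorableOn G (S \ B)
      (fun w => (k : ℤ) - degIn G A w + degIn G (S \ B) w - if w ∈ I then 1 else 0))

/-- An `(F,k,b)`-resolution of `G`: nested induced subgraphs `G_i` of `G` on the vertex
sets `A i`, where `G_i` is obtained from `G_{i-1}` by deleting `H_i - B_i` for an induced
`(F,k)`-boundary-reducible subgraph `H_i` (on vertex set `S i`) of `G_{i-1}`,
and the last graph `G_M` is itself reducible with empty boundary and has at most `b` vertices. -/
structure Resolution {V : Type} [Fintype V] [DecidableEq V]
    (F : Set ((W : Type) × SimpleGraph W)) (k b : ℕ)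
    (G : SimpleGraph V) [DecidableRel G.Adj] where
  M : ℕ
  S : ℕ → Finset V
  B : ℕ → Finset V
  A : ℕ → Finset V
  hA0 : A 0 = Finset.univ
  hAstep : ∀ i, 1 ≤ i → i ≤ M → A i = A (i - 1) \ (S i \ B i)
  avoid : ∀ p ∈ F, ¬ ContainsCopy G p
  red : ∀ i, 1 ≤ i → i ≤ M → BoundaryReducibleIn F k G (A (i - 1)) (S i) (B i)
  size : ∀ i, 1 ≤ i → i ≤ M → (S i \ B i).card ≤ b
  last : BoundaryReducibleIn F k G (A M) (A M) ∅
  lastsize : (A M).card ≤ b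

/-- A weak `(F,k,b)`-resolution of `G`; `Fx i` is the set `Fix(H_i)` for the `i`-th
reducible subgraph (`1 ≤ i ≤ M`), and `Fx 0` is the `Fix` set of the last graph `G_M`. -/
structure WeakResolution {V : Type} [Fintype V] [DecidableEq V]
    (F : Set ((W : Type) × SimpleGraph W)) (k b : ℕ)
    (G : SimpleGraph V) [DecidableRel G.Adj] where
  M : ℕ
  S : ℕ → Finset V
  B : ℕ → Finset V
  A : ℕ → Finset V
  Fx : ℕ → Finset V
  hA0 : A 0 = Finset.univ
  hAstep : ∀ i, 1 ≤ i → i ≤ M → A i = A (i - 1) \ (S i \ B i)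
  avoid : ∀ p ∈ F, ¬ ContainsCopy G p
  red : ∀ i, 1 ≤ i → i ≤ M → WeakBoundaryReducibleInWith F k G (A (i - 1)) (S i) (B i) (Fx i)
  size : ∀ i, 1 ≤ i → i ≤ M → (S i \ B i).card ≤ b
  last : WeakBoundaryReducibleInWith F k G (A M) (A M) ∅ (Fx 0)
  lastsize : (A M).card ≤ b

/-- `Fix(G)`: the union of the `Fix` sets of the reducible subgraphs of the resolution. -/
def WeakResolution.FixG {V : Type} [Fintype V] [DecidableEq V]
    {F : Set ((W : Type) × SimpleGraph W)} {k b : ℕ}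
    {G : SimpleGraph V} [DecidableRel G.Adj] (R : WeakResolution F k b G) : Finset V :=
  (Finset.range (R.M + 1)).biUnion R.Fx

section ListColoring

variable {V : Type} {G : SimpleGraph V}

theorem colorableOn_empty (f : V → ℤ) : ColorableOn G ∅ f :=
  fun _ _ => ⟨fun _ => 0, by simp, by simp⟩

theorem ColorableOn.mono {T : Finset V} {f g : V → ℤ} (h : ColorableOn G T f)
    (hfg : ∀ v ∈ T, f v ≤ g v) : ColorableOn G T g :=
  fun L hL => h L fun v hv => (hfg v hv).trans (hL v hv)

theorem ColorableOn.sub_indicator [DecidableEq V] {T I : Finset V} {f : V → ℤ} {x : V}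
    (h : ColorableOn G T (Function.update f x 1)) (hx : 2 ≤ f x) (hI : I ⊆ {x}) :
    ColorableOn G T fun w => f w - if w ∈ I then 1 else 0 := by
  refine h.mono fun w _ => ?_
  rcases eq_or_ne w x with rfl | hwx
  · split_ifs <;> simp only [Function.update_self] <;> omega
  · rw [Function.update_of_ne hwx, if_neg fun hw => hwx (mem_singleton.1 (hI hw))]
    omega

variable [DecidableRel G.Adj]

theorem degIn_mono {S T : Finset V} (h : S ⊆ T) (v : V) : degIn G S v ≤ degIn G T v :=
  card_le_card (filter_subset_filter _ h)

theorem card_le_degIn {N S : Finset V} {v : V} (hN : N ⊆ S) (hadj : ∀ w ∈ N, G.Adj v w) :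
    N.card ≤ degIn G S v :=
  card_le_card fun w hw => mem_filter.2 ⟨hN hw, hadj w hw⟩

theorem one_le_degIn {S : Finset V} {v w : V} (hvw : G.Adj v w) (hw : w ∈ S) :
    1 ≤ degIn G S v :=
  card_singleton w ▸ card_le_degIn (by simpa) (by simpa)

theorem degIn_univ [Fintype V] (v : V) : degIn G univ v = G.degree v := by
  rw [degIn, ← SimpleGraph.neighborFinset_eq_filter, SimpleGraph.card_neighborFinset_eq_degree]

variable [DecidableEq V]

theorem two_le_degIn {S : Finset V} {u v w : V} (hvu : G.Adj v u) (hvw : G.Adj v w) (huw : u ≠ w)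
    (hu : u ∈ S) (hw : w ∈ S) : 2 ≤ degIn G S v :=
  card_pair huw ▸ card_le_degIn (by simp [insert_subset_iff, hu, hw]) (by simp [hvu, hvw])

theorem ColorableOn.insert_of_degIn_lt {T : Finset V} {f : V → ℤ} (hT : ColorableOn G T f)
    {v : V} (hv : (degIn G T v : ℤ) < f v) : ColorableOn G (insert v T) f := by
  intro L hL
  obtain ⟨φ, hφL, hφ⟩ := hT L fun w hw => hL w (mem_insert_of_mem hw)
  have hfree : ((T.filter fun w => G.Adj v w).image φ).card < (L v).card := by
    have : ((T.filter fun w => G.Adj v w).image φ).card ≤ degIn G T v := card_image_le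
    have := hL v (mem_insert_self v T)
    omega
  obtain ⟨c, hcL, hc⟩ := exists_mem_notMem_of_card_lt_card hfree
  have hc' : ∀ w ∈ T, G.Adj v w → c ≠ φ w := fun w hw hvw hcw =>
    hc (mem_image.2 ⟨w, mem_filter.2 ⟨hw, hvw⟩, hcw.symm⟩)
  have hmem : ∀ w ∈ insert v T, w ≠ v → w ∈ T := fun w hw hwv =>
    (mem_insert.1 hw).resolve_left hwv
  refine ⟨Function.update φ v c, fun w hw => ?_, fun u hu w hw huw => ?_⟩
  · rcases eq_or_ne w v with hwv | hwv
    · rw [hwv, Function.update_self]; exact hcL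
    · rw [Function.update_of_ne hwv]; exact hφL w (hmem w hw hwv)
  · rcases eq_or_ne u v with huv | huv <;> rcases eq_or_ne w v with hwv | hwv
    · exact absurd huw (huv.trans hwv.symm ▸ G.loopless.irrefl u)
    · rw [huv, Function.update_self, Function.update_of_ne hwv]
      exact hc' w (hmem w hw hwv) (huv ▸ huw)
    · rw [hwv, Function.update_self, Function.update_of_ne huv]
      exact (hc' u (hmem u hu huv) (hwv ▸ huw.symm)).symm
    · rw [Function.update_of_ne huv, Function.update_of_ne hwv]
      exact hφ u (hmem u hu huv) w (hmem w hw hwv) huw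

theorem colorableOn_singleton {v : V} {f : V → ℤ} (hv : 1 ≤ f v) : ColorableOn G {v} f := by
  rw [← insert_empty]
  exact (colorableOn_empty f).insert_of_degIn_lt (by simp [degIn]; omega)

section Path

variable {a b c : V} {f : V → ℤ}

theorem colorableOn_path_update_end (hab : G.Adj a b) (hbc : G.Adj b c) (hac : a ≠ c)
    (hb : (degIn G {a, b, c} b : ℤ) ≤ f b) (hc : (degIn G {a, b, c} c : ℤ) < f c) :
    ColorableOn G {a, b, c} (Function.update f a 1) := by
  have hb2 : 2 ≤ degIn G {a, b, c} b := two_le_degIn hab.symm hbc hac (by simp) (by simp)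
  have hb1 : degIn G {a} b ≤ 1 := card_singleton a ▸ card_filter_le _ _
  have hP : ({a, b, c} : Finset V) = insert c (insert b {a}) := by
    ext; simp only [mem_insert, mem_singleton]; tauto
  rw [hP]
  refine ((colorableOn_singleton (by simp)).insert_of_degIn_lt ?_).insert_of_degIn_lt ?_
  · rw [Function.update_of_ne hab.ne']; omega
  · rw [Function.update_of_ne hac.symm]
    have := degIn_mono (G := G) (S := insert b {a}) (T := {a, b, c}) (by
      simp [insert_subset_iff]) c
    omega

theorem colorableOn_path_update_center (hab : G.Adj a b) (hbc : G.Adj b c)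
    (ha : (degIn G {a, b, c} a : ℤ) < f a) (hc : (degIn G {a, b, c} c : ℤ) < f c) :
    ColorableOn G {a, b, c} (Function.update f b 1) := by
  have hP : ({a, b, c} : Finset V) = insert c (insert a {b}) := by
    ext; simp only [mem_insert, mem_singleton]; tauto
  rw [hP]
  refine ((colorableOn_singleton (by simp)).insert_of_degIn_lt ?_).insert_of_degIn_lt ?_
  · rw [Function.update_of_ne hab.ne]
    have := degIn_mono (G := G) (S := {b}) (T := {a, b, c}) (by simp) a
    omega
  · rw [Function.update_of_ne hbc.ne']
    have := degIn_mono (G := G) (S := insert a {b}) (T := {a, b, c})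
      (by simp [insert_subset_iff]) c
    omega

theorem colorableOn_path_update (hab : G.Adj a b) (hbc : G.Adj b c) (hac : a ≠ c)
    (ha : (degIn G {a, b, c} a : ℤ) < f a) (hb : (degIn G {a, b, c} b : ℤ) ≤ f b)
    (hc : (degIn G {a, b, c} c : ℤ) < f c) :
    ∀ x ∈ ({a, b, c} : Finset V), ColorableOn G {a, b, c} (Function.update f x 1) := by
  have hP : ({c, b, a} : Finset V) = {a, b, c} := by
    ext; simp only [mem_insert, mem_singleton]; tauto
  simp only [mem_insert, mem_singleton, forall_eq_or_imp, forall_eq]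
  refine ⟨colorableOn_path_update_end hab hbc hac hb hc,
    colorableOn_path_update_center hab hbc ha hc, ?_⟩
  rw [← hP] at ha hb ⊢
  exact colorableOn_path_update_end hbc.symm hab.symm hac.symm hb ha

theorem colorableOn_path_sub_indicator (hab : G.Adj a b) (hbc : G.Adj b c) (hac : a ≠ c)
    (ha : (degIn G {a, b, c} a : ℤ) < f a) (hb : (degIn G {a, b, c} b : ℤ) ≤ f b)
    (hc : (degIn G {a, b, c} c : ℤ) < f c) {I : Finset V} (hI : I ⊆ {a, b, c})
    (hI1 : I.card ≤ 1) :
    ColorableOn G {a, b, c} fun w => f w - if w ∈ I then 1 else 0 := by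
  have h2 : ∀ x ∈ ({a, b, c} : Finset V), 2 ≤ f x := by
    have ha1 : 1 ≤ degIn G {a, b, c} a := one_le_degIn hab (by simp)
    have hb2 : 2 ≤ degIn G {a, b, c} b := two_le_degIn hab.symm hbc hac (by simp) (by simp)
    have hc1 : 1 ≤ degIn G {a, b, c} c := one_le_degIn hbc.symm (by simp)
    simp only [mem_insert, mem_singleton, forall_eq_or_imp, forall_eq]
    omega
  obtain ⟨x, hx, hIx⟩ : ∃ x ∈ ({a, b, c} : Finset V), I ⊆ {x} := by
    rcases I.eq_empty_or_nonempty with rfl | ⟨x, hx⟩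
    · exact ⟨a, by simp, empty_subset _⟩
    · exact ⟨x, hI hx, fun y hy => mem_singleton.2 (card_le_one.1 hI1 y hy x hx)⟩
  exact (colorableOn_path_update hab hbc hac ha hb hc x hx).sub_indicator (h2 x hx) hIx

end Path

end ListColoring

section Forbidding

variable {V : Type} {G : SimpleGraph V} {S I : Finset V} {a b c d : V}

theorem apexGraph_containsCopy_house (ha : a ∈ S) (hb : b ∈ S) (hc : c ∈ S) (hd : d ∈ S)
    (hab : G.Adj a b) (hbc : G.Adj b c) (hcd : G.Adj c d) (hda : G.Adj d a)
    (hac : a ≠ c) (hbd : b ≠ d) (haI : a ∈ I) (hbI : b ∈ I) :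
    ContainsCopy (apexGraph G S I) ⟨Fin 5, houseGraph⟩ := by
  refine ⟨⟨![.inl ⟨a, ha⟩, .inl ⟨b, hb⟩, .inl ⟨c, hc⟩, .inl ⟨d, hd⟩, .inr ()],
    fun {x y} h => ?_⟩, fun x y h => ?_⟩
  · fin_cases x <;> fin_cases y <;>
      simp [houseGraph, apexGraph, hab, hbc, hcd, hda, hab.symm, hbc.symm, hcd.symm, hda.symm,
        haI, hbI] at h ⊢
  · fin_cases x <;> fin_cases y <;>
      simp_all [hab.ne, hbc.ne, hcd.ne, hda.ne, hab.ne', hbc.ne', hcd.ne', hda.ne', hac.symm,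
        hbd.symm]

theorem apexGraph_containsCopy_K23 (ha : a ∈ S) (hb : b ∈ S) (hc : c ∈ S) (hd : d ∈ S)
    (hab : G.Adj a b) (hbc : G.Adj b c) (hcd : G.Adj c d) (hda : G.Adj d a)
    (hac : a ≠ c) (hbd : b ≠ d) (haI : a ∈ I) (hcI : c ∈ I) :
    ContainsCopy (apexGraph G S I)
      ⟨Fin 2 ⊕ Fin 3, completeBipartiteGraph (Fin 2) (Fin 3)⟩ := by
  refine ⟨⟨Sum.elim ![.inl ⟨a, ha⟩, .inl ⟨c, hc⟩] ![.inl ⟨b, hb⟩, .inl ⟨d, hd⟩, .inr ()],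
    fun {x y} h => ?_⟩, fun x y h => ?_⟩
  · rcases x with x | x <;> rcases y with y | y <;> fin_cases x <;> fin_cases y <;>
      simp [apexGraph, hab, hbc, hcd, hda, hab.symm, hbc.symm, hcd.symm, hda.symm, haI, hcI]
        at h ⊢
  · rcases x with x | x <;> rcases y with y | y <;> fin_cases x <;> fin_cases y <;>
      simp_all [hab.ne, hbc.ne, hcd.ne, hda.ne, hab.ne', hbc.ne', hcd.ne', hda.ne', hac.symm,
        hbd.symm]

theorem card_le_one_of_forbidding [DecidableEq V] (hab : G.Adj a b) (hbc : G.Adj b c)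
    (hcd : G.Adj c d) (hda : G.Adj d a) (hac : a ≠ c) (hbd : b ≠ d) (hI : I ⊆ {a, b, c})
    (hforb : Forbidding {⟨Fin 5, houseGraph⟩,
      ⟨Fin 2 ⊕ Fin 3, completeBipartiteGraph (Fin 2) (Fin 3)⟩} G {a, b, c, d} I) :
    I.card ≤ 1 := by
  have hhouse := hforb _ (Set.mem_insert _ _)
  have hK23 := hforb _ (Set.mem_insert_of_mem _ rfl)
  have hab' : ¬(a ∈ I ∧ b ∈ I) := fun h => hhouse <| apexGraph_containsCopy_house
    (by simp) (by simp) (by simp) (by simp) hab hbc hcd hda hac hbd h.1 h.2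
  have hbc' : ¬(b ∈ I ∧ c ∈ I) := fun h => hhouse <| apexGraph_containsCopy_house
    (by simp) (by simp) (by simp) (by simp) hbc hcd hda hab hbd hac.symm h.1 h.2
  have hac' : ¬(a ∈ I ∧ c ∈ I) := fun h => hK23 <| apexGraph_containsCopy_K23
    (by simp) (by simp) (by simp) (by simp) hab hbc hcd hda hac hbd h.1 h.2
  refine card_le_one.2 fun u hu w hw => ?_
  have hu' := hI hu
  have hw' := hI hw
  simp only [mem_insert, mem_singleton] at hu' hw'
  rcases hu' with rfl | rfl | rfl <;> rcases hw' with rfl | rfl | rfl <;> tauto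

end Forbidding

theorem fourCycle_454_reducible {V : Type} [Fintype V] [DecidableEq V]
    (G : SimpleGraph V) [DecidableRel G.Adj]
    (v1 v2 v3 v4 : V)
    (h12 : G.Adj v1 v2) (h23 : G.Adj v2 v3) (h34 : G.Adj v3 v4) (h41 : G.Adj v4 v1)
    (h13 : v1 ≠ v3) (h24 : v2 ≠ v4)
    (hd1 : G.degree v1 = 4) (hd2 : G.degree v2 = 5) (hd3 : G.degree v3 = 4) :
    BoundaryReducibleIn
      ({⟨Fin 5, houseGraph⟩, ⟨Fin 2 ⊕ Fin 3, completeBipartiteGraph (Fin 2) (Fin 3)⟩} :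
        Set ((W : Type) × SimpleGraph W)) 5 G
      Finset.univ {v1, v2, v3, v4} {v4} := by
  set P : Finset V := {v1, v2, v3}
  have hT : ({v1, v2, v3, v4} : Finset V) \ {v4} = P := by
    simp [P, insert_sdiff_of_notMem, h41.ne', h24, h34.ne]
  have h1 : (degIn G P v1 : ℤ) < 5 - degIn G univ v1 + degIn G P v1 := by
    rw [degIn_univ, hd1]; omega
  have h2 : (degIn G P v2 : ℤ) ≤ 5 - degIn G univ v2 + degIn G P v2 := by
    rw [degIn_univ, hd2]; omega
  have h3 : (degIn G P v3 : ℤ) < 5 - degIn G univ v3 + degIn G P v3 := by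
    rw [degIn_univ, hd3]; omega
  refine ⟨subset_univ _, (ssubset_iff_of_subset (by simp)).2 ⟨v1, by simp, by simpa using
    h41.ne'⟩, ?_, fun I hI _ hforb => ?_⟩
  · rw [hT]
    exact colorableOn_path_update h12 h23 h13 h1 h2 h3
  · rw [hT] at hI ⊢
    exact colorableOn_path_sub_indicator h12 h23 h13 h1 h2 h3 hI
      (card_le_one_of_forbidding h12 h23 h34 h41 h13 h24 hI hforb)
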